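/- Let k > 0 and let a, b be nonzero real numbers. Then the infimum of 1/((2k − R·a² − S·b²)·√(R·S)) over all R ≥ S > 0 with R·a² + S·b² < 2k equals 2·k^{−2}·|ab| if |b| ≥ |a|, and equals k^{−2}·(a² + b²) if |b| < |a|. Moreover, when |b| ≥ |a| the infimum is attained at R = k/(2a²) and S = k/(2b²). -/

import Mathlib

/-!
With `s = √(RS)` and `X = Ra² + Sb²`, every admissible pair satisfies `m·s ≤ X`, where
`m = 2|ab|` by AM–GM, and, when `|b| < |a|`, also `m = a² + b²`, because
`X − (a² + b²)√R√S = (√R − √S)(a²√R − b²√S) ≥ 0` for `R ≥ S`. Then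
`m·(2k − X)·s ≤ (2k − m s)·m s ≤ k²`, so the gain product is at least `m/k²`. For
`m = 2|ab|` this is attained at `R = k/(2a²)`, `S = k/(2b²)` (admissible iff `|a| ≤ |b|`),
for `m = a² + b²` at `R = S = k/(a² + b²)`.
-/

open Real

noncomputable def gainProduct (k a b R S : ℝ) : ℝ :=
  1 / ((2 * k - R * a ^ 2 - S * b ^ 2) * √(R * S))

theorem inv_sq_mul_le_one_div_of_mul_le {k m s X : ℝ} (hm : 0 < m) (hs : 0 < s)
    (hX : m * s ≤ X) (hXk : X < 2 * k) : k⁻¹ ^ 2 * m ≤ 1 / ((2 * k - X) * s) := by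
  have hk : 0 < k := by nlinarith [mul_pos hm hs]
  have hgap : m * ((2 * k - X) * s) ≤ (2 * k - m * s) * (m * s) := by
    nlinarith [mul_le_mul_of_nonneg_left hX (mul_pos hm hs).le]
  have hamgm : (2 * k - m * s) * (m * s) ≤ k ^ 2 := by nlinarith [sq_nonneg (k - m * s)]
  rw [inv_pow, inv_mul_eq_div, div_le_div_iff₀ (by positivity) (mul_pos (by linarith) hs)]
  linarith

theorem two_mul_abs_mul_mul_sqrt_le {R S : ℝ} (hR : 0 ≤ R) (hS : 0 ≤ S) (a b : ℝ) :
    2 * |a * b| * √(R * S) ≤ R * a ^ 2 + S * b ^ 2 := by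
  have hx : (√R * |a|) ^ 2 = R * a ^ 2 := by rw [mul_pow, sq_sqrt hR, sq_abs]
  have hy : (√S * |b|) ^ 2 = S * b ^ 2 := by rw [mul_pow, sq_sqrt hS, sq_abs]
  calc 2 * |a * b| * √(R * S) = 2 * (√R * |a|) * (√S * |b|) := by
        rw [sqrt_mul hR, abs_mul]; ring
    _ ≤ (√R * |a|) ^ 2 + (√S * |b|) ^ 2 := two_mul_le_add_sq _ _
    _ = R * a ^ 2 + S * b ^ 2 := by rw [hx, hy]

theorem sq_add_sq_mul_sqrt_le {R S a b : ℝ} (hS : 0 ≤ S) (hSR : S ≤ R)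
    (hba : b ^ 2 ≤ a ^ 2) :
    (a ^ 2 + b ^ 2) * √(R * S) ≤ R * a ^ 2 + S * b ^ 2 := by
  have hR : 0 ≤ R := hS.trans hSR
  have hyx : √S ≤ √R := sqrt_le_sqrt hSR
  have hfactor : 0 ≤ (√R - √S) * (a ^ 2 * √R - b ^ 2 * √S) :=
    mul_nonneg (sub_nonneg.mpr hyx)
      (sub_nonneg.mpr (mul_le_mul hba hyx (sqrt_nonneg S) (sq_nonneg a)))
  calc (a ^ 2 + b ^ 2) * √(R * S)
      = R * a ^ 2 + S * b ^ 2 - (√R - √S) * (a ^ 2 * √R - b ^ 2 * √S) := by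
        rw [sqrt_mul hR]
        linear_combination (a ^ 2) * sq_sqrt hR + (b ^ 2) * sq_sqrt hS
    _ ≤ R * a ^ 2 + S * b ^ 2 := sub_le_self _ hfactor

theorem inv_sq_mul_le_gainProduct {k a b R S m : ℝ} (hm : 0 < m) (hR : 0 < R) (hS : 0 < S)
    (hmul : m * √(R * S) ≤ R * a ^ 2 + S * b ^ 2) (hlt : R * a ^ 2 + S * b ^ 2 < 2 * k) :
    k⁻¹ ^ 2 * m ≤ gainProduct k a b R S := by
  rw [gainProduct, sub_sub]
  exact inv_sq_mul_le_one_div_of_mul_le hm (sqrt_pos.mpr (mul_pos hR hS)) hmul hlt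

theorem gainProduct_div_two_sq {k : ℝ} (hk : 0 < k) {a b : ℝ} (ha : a ≠ 0) (hb : b ≠ 0) :
    gainProduct k a b (k / (2 * a ^ 2)) (k / (2 * b ^ 2)) = 2 * k⁻¹ ^ 2 * |a * b| := by
  have hab : 0 < |a * b| := abs_pos.mpr (mul_ne_zero ha hb)
  have hsqrt : √(k / (2 * a ^ 2) * (k / (2 * b ^ 2))) = k / (2 * |a * b|) := by
    rw [← sqrt_sq (by positivity : 0 ≤ k / (2 * |a * b|)), div_pow, mul_pow, sq_abs]
    congr 1
    field_simp
  rw [gainProduct, hsqrt]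
  field_simp
  ring

theorem gainProduct_div_sq_add_sq {k : ℝ} (hk : 0 < k) {a b : ℝ} (ha : a ≠ 0) :
    gainProduct k a b (k / (a ^ 2 + b ^ 2)) (k / (a ^ 2 + b ^ 2)) =
      k⁻¹ ^ 2 * (a ^ 2 + b ^ 2) := by
  have hc : 0 < a ^ 2 + b ^ 2 := by positivity
  have hgap : 2 * k - k / (a ^ 2 + b ^ 2) * a ^ 2 - k / (a ^ 2 + b ^ 2) * b ^ 2 = k := by
    field_simp
    ring
  rw [gainProduct, sqrt_mul_self (by positivity), hgap]
  field_simp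

theorem gain_product_minimization (k a b : ℝ) (hk : 0 < k) (ha : a ≠ 0) (hb : b ≠ 0) :
    IsGLB {v : ℝ | ∃ R S : ℝ, S ≤ R ∧ 0 < S ∧ R * a ^ 2 + S * b ^ 2 < 2 * k ∧
        v = 1 / ((2 * k - R * a ^ 2 - S * b ^ 2) * Real.sqrt (R * S))}
      (if |a| ≤ |b| then 2 * k⁻¹ ^ 2 * |a * b| else k⁻¹ ^ 2 * (a ^ 2 + b ^ 2)) ∧
    (|a| ≤ |b| →
      (let R := k / (2 * a ^ 2); let S := k / (2 * b ^ 2);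
       S ≤ R ∧ 0 < S ∧ R * a ^ 2 + S * b ^ 2 < 2 * k ∧
         1 / ((2 * k - R * a ^ 2 - S * b ^ 2) * Real.sqrt (R * S)) =
           2 * k⁻¹ ^ 2 * |a * b|)) := by
  have attained (hab : |a| ≤ |b|) :
      k / (2 * b ^ 2) ≤ k / (2 * a ^ 2) ∧ 0 < k / (2 * b ^ 2) ∧
      k / (2 * a ^ 2) * a ^ 2 + k / (2 * b ^ 2) * b ^ 2 < 2 * k ∧
      gainProduct k a b (k / (2 * a ^ 2)) (k / (2 * b ^ 2)) = 2 * k⁻¹ ^ 2 * |a * b| := by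
    have hsq : a ^ 2 ≤ b ^ 2 := sq_le_sq.mpr hab
    refine ⟨by gcongr, by positivity, ?_, gainProduct_div_two_sq hk ha hb⟩
    field_simp
    linarith
  refine ⟨?_, attained⟩
  split_ifs with hab
  · obtain ⟨hSR₀, hS₀, hlt₀, hvalue⟩ := attained hab
    refine IsLeast.isGLB ⟨⟨_, _, hSR₀, hS₀, hlt₀, hvalue.symm⟩, ?_⟩
    rintro _ ⟨R, S, hSR, hS, hlt, rfl⟩
    rw [show 2 * k⁻¹ ^ 2 * |a * b| = k⁻¹ ^ 2 * (2 * |a * b|) by ring]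
    exact inv_sq_mul_le_gainProduct (by positivity) (hS.trans_le hSR) hS
      (two_mul_abs_mul_mul_sqrt_le (hS.le.trans hSR) hS.le a b) hlt
  · have hc : 0 < a ^ 2 + b ^ 2 := by positivity
    have hba : b ^ 2 ≤ a ^ 2 := (sq_lt_sq.mpr (not_le.mp hab)).le
    refine IsLeast.isGLB ⟨⟨k / (a ^ 2 + b ^ 2), _, le_rfl, by positivity, ?_,
      (gainProduct_div_sq_add_sq hk ha).symm⟩, ?_⟩
    · rw [← mul_add, div_mul_cancel₀ _ hc.ne']
      linarith
    rintro _ ⟨R, S, hSR, hS, hlt, rfl⟩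
    exact inv_sq_mul_le_gainProduct hc (hS.trans_le hSR) hS
      (sq_add_sq_mul_sqrt_le hS.le hSR hba) hlt
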